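/- arXiv:2404.13029 — 3 statements merged into one kernel-verified Lean document; each statement's English description precedes it below -/
import Mathlib

section
/- Let b₀ > 0 and C₁, C₂ ∈ ℝ with 2b₀²C₂ ≥ C₁². Define Θ^{02}(l) = C₁/(b₀² + l²) and Θ^{01}(l) = √(2C₂(b₀² + l²) - C₁²)/√(b₀² + l²). Then these functions satisfy the coupled equations Θ^{01}·∂_l Θ^{01} = -(Θ^{02})²·Γ¹_{22} and ∂_l Θ^{02} = -2 Θ^{02}·Γ²_{12}, where Γ¹_{22} = -l and Γ²_{12} = l/(b₀² + l²). -/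
/-!
Both identities are direct differentiations once `Θ⁰¹` is written as `√f` with
`f l = 2 C₂ - C₁ Θ⁰²(l)`. Then `Θ⁰¹ · (Θ⁰¹)' = f' / 2` wherever `f > 0`, and at a zero of `f`
both sides vanish because `f ≥ 0` (this is where `2 b₀² C₂ ≥ C₁²` enters) has a minimum there.
-/

open Real

lemma hasDerivAt_sq_add_sq (b l : ℝ) : HasDerivAt (fun l : ℝ => b ^ 2 + l ^ 2) (2 * l) l := by
  simpa using (hasDerivAt_pow 2 l).const_add (b ^ 2)

lemma hasDerivAt_div_sq_add_sq (C : ℝ) {b : ℝ} (hb : b ≠ 0) (l : ℝ) :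
    HasDerivAt (fun l : ℝ => C / (b ^ 2 + l ^ 2))
      (-2 * (C / (b ^ 2 + l ^ 2)) * (l / (b ^ 2 + l ^ 2))) l := by
  have hpos : 0 < b ^ 2 + l ^ 2 := by positivity
  refine ((hasDerivAt_const l C).div (hasDerivAt_sq_add_sq b l) hpos.ne').congr_deriv ?_
  field_simp
  ring

lemma sqrt_mul_deriv_sqrt {f : ℝ → ℝ} {f' x : ℝ} (hf : HasDerivAt f f' x)
    (hf_nonneg : ∀ y, 0 ≤ f y) : √(f x) * deriv (fun y => √(f y)) x = f' / 2 := by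
  rcases (hf_nonneg x).eq_or_lt with hzero | hpos
  · have hmin : IsLocalMin f x := Filter.Eventually.of_forall fun y => hzero ▸ hf_nonneg y
    rw [hmin.hasDerivAt_eq_zero hf, ← hzero]
    simp
  · rw [(hf.sqrt hpos.ne').deriv]
    have hsqrt : 0 < √(f x) := sqrt_pos.mpr hpos
    field_simp

lemma two_mul_sub_mul_div_sq_add_sq_nonneg {b₀ C₁ C₂ : ℝ} (hb : 0 < b₀)
    (hC : C₁ ^ 2 ≤ 2 * b₀ ^ 2 * C₂) (l : ℝ) :
    0 ≤ 2 * C₂ - C₁ * (C₁ / (b₀ ^ 2 + l ^ 2)) := by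
  have hb2 : 0 < b₀ ^ 2 := by positivity
  have hle : C₁ * (C₁ / (b₀ ^ 2 + l ^ 2)) ≤ C₁ ^ 2 / b₀ ^ 2 := by
    rw [mul_div_assoc', ← sq]
    exact div_le_div_of_nonneg_left (sq_nonneg C₁) hb2 (by nlinarith [sq_nonneg l])
  have hdiv : C₁ ^ 2 / b₀ ^ 2 ≤ 2 * C₂ := by
    rw [div_le_iff₀ hb2]
    linarith
  linarith

lemma sqrt_div_sqrt_sq_add_sq {b₀ : ℝ} (hb : b₀ ≠ 0) (C₁ C₂ l : ℝ) :
    √(2 * C₂ * (b₀ ^ 2 + l ^ 2) - C₁ ^ 2) / √(b₀ ^ 2 + l ^ 2)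
      = √(2 * C₂ - C₁ * (C₁ / (b₀ ^ 2 + l ^ 2))) := by
  have hpos : 0 < b₀ ^ 2 + l ^ 2 := by positivity
  rw [← sqrt_div' _ hpos.le]
  congr 1
  field_simp

theorem stmt_8 (b₀ C₁ C₂ : ℝ) (hb : 0 < b₀) (hC : C₁ ^ 2 ≤ 2 * b₀ ^ 2 * C₂)
    (Θ02 Θ01 : ℝ → ℝ)
    (hΘ02 : Θ02 = fun l => C₁ / (b₀ ^ 2 + l ^ 2))
    (hΘ01 : Θ01 = fun l =>
      Real.sqrt (2 * C₂ * (b₀ ^ 2 + l ^ 2) - C₁ ^ 2) / Real.sqrt (b₀ ^ 2 + l ^ 2)) :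
    (∀ l : ℝ, Θ01 l * deriv Θ01 l = -(Θ02 l) ^ 2 * (-l)) ∧
    (∀ l : ℝ, HasDerivAt Θ02 (-2 * Θ02 l * (l / (b₀ ^ 2 + l ^ 2))) l) := by
  have hΘ02' : ∀ l, HasDerivAt Θ02 (-2 * Θ02 l * (l / (b₀ ^ 2 + l ^ 2))) l := fun l => by
    subst hΘ02
    exact hasDerivAt_div_sq_add_sq C₁ hb.ne' l
  have hΘ01_eq : Θ01 = fun l => √(2 * C₂ - C₁ * Θ02 l) := by
    subst hΘ01 hΘ02
    exact funext (sqrt_div_sqrt_sq_add_sq hb.ne' C₁ C₂)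
  refine ⟨fun l => ?_, hΘ02'⟩
  have hf := ((hΘ02' l).const_mul C₁).const_sub (2 * C₂)
  have hf_nonneg : ∀ y, 0 ≤ 2 * C₂ - C₁ * Θ02 y := fun y => by
    subst hΘ02
    exact two_mul_sub_mul_div_sq_add_sq_nonneg hb hC y
  rw [hΘ01_eq, sqrt_mul_deriv_sqrt hf hf_nonneg, hΘ02]
  ring
end

section
/- For the Schwarzschild metric with α(r) = ½ log(1 - 2M/r), the function f(r) = (C/r)·√(1 - 2M/r) on (2M, ∞) satisfies f'(r) = (α'(r) - 1/r)·f(r), and its absolute value attains its unique maximum on (2M,∞) at r = 3M. -/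
open Real Set

/-! Off its sign, `f` is `√V` scaled by `|C|`, where `V r = (1 - 2M/r)/r² = (r - 2M)/r³` is the
effective potential of null geodesics. Since `V' r = 2(3M - r)/r⁴`, `V` rises up to the photon
sphere `r = 3M` and falls after it. The derivative identity is the product rule together with
`(√u)' = (u'/2u)√u`, which is `α' √u` for `α = ½ log u`. -/

noncomputable def photonPotential (M r : ℝ) : ℝ := (1 - 2 * M / r) / r ^ 2

theorem HasDerivAt.sqrt_of_pos {f : ℝ → ℝ} {f' x : ℝ} (hf : HasDerivAt f f' x) (hx : 0 < f x) :
    HasDerivAt (fun y => √(f y)) (f' / (2 * f x) * √(f x)) x := by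
  convert hf.sqrt hx.ne' using 1
  have hs : √(f x) ≠ 0 := (sqrt_pos.2 hx).ne'
  field_simp
  rw [sq_sqrt hx.le]

theorem hasDerivAt_div_mul_sqrt_one_sub (M C : ℝ) {r : ℝ} (hr : r ≠ 0) (hu : 0 < 1 - 2 * M / r) :
    HasDerivAt (fun r => C / r * √(1 - 2 * M / r))
      (((M / r ^ 2) / (1 - 2 * M / r) - 1 / r) * (C / r * √(1 - 2 * M / r))) r := by
  have hinv : HasDerivAt (fun x : ℝ => x⁻¹) (-(r ^ 2)⁻¹) r := hasDerivAt_inv hr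
  have hu' : HasDerivAt (fun x => 1 - 2 * M / x) (2 * M / r ^ 2) r := by
    simpa [div_eq_mul_inv] using (hinv.const_mul (2 * M)).const_sub 1
  have h := (hinv.const_mul C).mul (hu'.sqrt_of_pos hu)
  simp only [← div_eq_mul_inv] at h
  refine h.congr_deriv ?_
  field_simp
  ring

theorem abs_div_mul_sqrt_one_sub (M C : ℝ) {r : ℝ} (hr : 0 < r) :
    |C / r * √(1 - 2 * M / r)| = |C| * √(photonPotential M r) := by
  rw [photonPotential, sqrt_div' _ (sq_nonneg r), sqrt_sq hr.le, abs_mul, abs_div,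
    abs_of_pos hr, abs_of_nonneg (sqrt_nonneg _)]
  ring

theorem photonPotential_eq (M : ℝ) {r : ℝ} (hr : r ≠ 0) :
    photonPotential M r = (r - 2 * M) / r ^ 3 := by
  rw [photonPotential]
  field_simp

theorem photonPotential_nonneg {M r : ℝ} (hr : 0 < r) (hMr : 2 * M ≤ r) :
    0 ≤ photonPotential M r := by
  rw [photonPotential_eq M hr.ne']
  exact div_nonneg (sub_nonneg.2 hMr) (by positivity)

theorem hasDerivAt_photonPotential (M : ℝ) {r : ℝ} (hr : r ≠ 0) :
    HasDerivAt (photonPotential M) (2 * (3 * M - r) / r ^ 4) r := by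
  have h : HasDerivAt (fun x => (x - 2 * M) / x ^ 3) _ r :=
    ((hasDerivAt_id r).sub_const (2 * M)).div (hasDerivAt_pow 3 r) (pow_ne_zero 3 hr)
  refine (h.congr_of_eventuallyEq ?_).congr_deriv ?_
  · filter_upwards [isOpen_ne.mem_nhds hr] with x hx using photonPotential_eq M hx
  · simp only [id]
    field_simp
    ring

theorem strictMonoOn_photonPotential (M : ℝ) :
    StrictMonoOn (photonPotential M) (Ioc 0 (3 * M)) := by
  refine strictMonoOn_of_deriv_pos (convex_Ioc _ _) (fun x hx => ?_) fun x hx => ?_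
  · exact (hasDerivAt_photonPotential M hx.1.ne').continuousAt.continuousWithinAt
  rw [interior_Ioc] at hx
  have hx0 : 0 < x := hx.1
  rw [(hasDerivAt_photonPotential M hx0.ne').deriv]
  exact div_pos (by linarith [hx.2]) (by positivity)

theorem strictAntiOn_photonPotential {M : ℝ} (hM : 0 < M) :
    StrictAntiOn (photonPotential M) (Ici (3 * M)) := by
  have hpos : ∀ x ∈ Ici (3 * M), 0 < x := fun x hx => by linarith [mem_Ici.1 hx]
  refine strictAntiOn_of_deriv_neg (convex_Ici _) (fun x hx => ?_) fun x hx => ?_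
  · exact (hasDerivAt_photonPotential M (hpos x hx).ne').continuousAt.continuousWithinAt
  rw [interior_Ici] at hx
  have hx0 : 0 < x := hpos x (mem_Ici_of_Ioi hx)
  rw [(hasDerivAt_photonPotential M hx0.ne').deriv]
  exact div_neg_of_neg_of_pos (by linarith [mem_Ioi.1 hx]) (by positivity)

theorem lt_of_strictMonoOn_Ioc_of_strictAntiOn_Ici {α β : Type*} [LinearOrder α] [Preorder β]
    {g : α → β} {a b r : α} (hmono : StrictMonoOn g (Ioc a b)) (hanti : StrictAntiOn g (Ici b))
    (har : a < r) (hrb : r ≠ b) : g r < g b := by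
  rcases hrb.lt_or_gt with hlt | hgt
  · exact hmono ⟨har, hlt.le⟩ ⟨har.trans hlt, le_rfl⟩ hlt
  · exact hanti self_mem_Ici hgt.le hgt

theorem abs_div_mul_sqrt_one_sub_lt_iff {M C x y : ℝ} (hC : C ≠ 0) (hM : 0 ≤ M) (hx : 2 * M < x)
    (hy : 2 * M < y) :
    |C / x * √(1 - 2 * M / x)| < |C / y * √(1 - 2 * M / y)| ↔
      photonPotential M x < photonPotential M y := by
  have hx0 : 0 < x := by linarith
  rw [abs_div_mul_sqrt_one_sub M C hx0, abs_div_mul_sqrt_one_sub M C (by linarith),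
    mul_lt_mul_iff_right₀ (abs_pos.2 hC), sqrt_lt_sqrt_iff (photonPotential_nonneg hx0 hx.le)]

theorem stmt_10 (M C : ℝ) (hM : 0 < M) (hC : C ≠ 0)
    (f : ℝ → ℝ) (hf : f = fun r => C / r * Real.sqrt (1 - 2 * M / r)) :
    (∀ r ∈ Ioi (2 * M),
      HasDerivAt f (((M / r ^ 2) / (1 - 2 * M / r) - 1 / r) * f r) r) ∧
    StrictMonoOn (fun r => |f r|) (Ioc (2 * M) (3 * M)) ∧
    StrictAntiOn (fun r => |f r|) (Ici (3 * M)) ∧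
    (∀ r ∈ Ioi (2 * M), r ≠ 3 * M → |f r| < |f (3 * M)|) := by
  subst hf
  have h3M : 2 * M < 3 * M := by linarith
  have hlt {x y : ℝ} (hx : 2 * M < x) (hy : 2 * M < y) :=
    abs_div_mul_sqrt_one_sub_lt_iff hC hM.le hx hy
  have hmono : StrictMonoOn (photonPotential M) (Ioc (2 * M) (3 * M)) :=
    (strictMonoOn_photonPotential M).mono (Ioc_subset_Ioc_left (by linarith))
  have hanti := strictAntiOn_photonPotential hM
  refine ⟨fun r hr => ?_, fun x hx y hy hxy => (hlt hx.1 hy.1).2 (hmono hx hy hxy),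
    fun x hx y hy hxy =>
      (hlt (h3M.trans_le (hx.trans hxy.le)) (h3M.trans_le hx)).2 (hanti hx hy hxy),
    fun r hr hne => (hlt hr h3M).2 (lt_of_strictMonoOn_Ioc_of_strictAntiOn_Ici hmono hanti hr hne)⟩
  have hr0 : 0 < r := by linarith [mem_Ioi.1 hr]
  exact hasDerivAt_div_mul_sqrt_one_sub M C hr0.ne' (sub_pos.2 ((div_lt_one hr0).2 hr))
end

section
/- For the Morris–Thorne wormhole metric g = -dt² + dl² + (b₀²+l²)dΩ², any antisymmetric tensor Θ satisfying R^α_{λγδ}Θ^{λβ} + R^β_{λγδ}Θ^{αλ} = 0 (curvature obstruction from covariant constancy) must have Θ^{12} = Θ^{13} = Θ^{23} = 0; in particular Θ cannot be invertible as a 4×4 matrix at any point. -/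
open Real Matrix

/-- Riemann block: a pair (i,j) with value v, filled in with the symmetries
R_{ijij} = R_{jiji} = v, R_{ijji} = R_{jiij} = -v. -/
def riemBlk (i j : Fin 4) (v : ℝ) : Fin 4 → Fin 4 → Fin 4 → Fin 4 → ℝ :=
  fun a b c d =>
    if a = i ∧ b = j ∧ c = i ∧ d = j then v
    else if a = j ∧ b = i ∧ c = j ∧ d = i then v
    else if a = i ∧ b = j ∧ c = j ∧ d = i then -v
    else if a = j ∧ b = i ∧ c = i ∧ d = j then -v
    else 0

/-- Riemann tensor (all indices lowered) of the Morris–Thorne wormhole: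
R_{1212} = -b₀²/(b₀²+l²), R_{1313} = -b₀²sin²ϑ/(b₀²+l²), R_{2323} = b₀²sin²ϑ. -/
noncomputable def whRiem (b₀ l ϑ : ℝ) : Fin 4 → Fin 4 → Fin 4 → Fin 4 → ℝ :=
  fun a b c d =>
    riemBlk 1 2 (-(b₀ ^ 2 / (b₀ ^ 2 + l ^ 2))) a b c d
    + riemBlk 1 3 (-(b₀ ^ 2 * Real.sin ϑ ^ 2 / (b₀ ^ 2 + l ^ 2))) a b c d
    + riemBlk 2 3 (b₀ ^ 2 * Real.sin ϑ ^ 2) a b c d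

/-- Inverse metric of g = -dt² + dl² + (b₀²+l²)(dϑ² + sin²ϑ dφ²). -/
noncomputable def whGinv (b₀ l ϑ : ℝ) : Matrix (Fin 4) (Fin 4) ℝ :=
  Matrix.diagonal ![-1, 1, 1 / (b₀ ^ 2 + l ^ 2),
    1 / ((b₀ ^ 2 + l ^ 2) * Real.sin ϑ ^ 2)]

/-- Riemann tensor with the first index raised, R^α_{λγδ}. -/
noncomputable def whRiemMix (b₀ l ϑ : ℝ) (α lam γ δ : Fin 4) : ℝ :=
  ∑ μ, whGinv b₀ l ϑ α μ * whRiem b₀ l ϑ μ lam γ δ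

/-! The curvature condition with `(α, β, γ, δ) = (1, 3, 1, 2), (2, 1, 2, 3), (3, 1, 2, 3)` picks out
a single component of `Θ` each time, multiplied by a nonzero Riemann component; this kills the
spatial part of `Θ`. An antisymmetric `Θ` with vanishing spatial part has its rows `1` and `2`
supported in column `0`, so they are proportional and `det Θ = 0`. -/

theorem Matrix.det_eq_zero_of_rows_supported_at {n K : Type*} [Fintype n] [DecidableEq n]
    [Field K] (M : Matrix n n K) {i j c : n} (hij : i ≠ j)
    (hi : ∀ k ≠ c, M i k = 0) (hj : ∀ k ≠ c, M j k = 0) : M.det = 0 := by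
  by_cases hic : M i c = 0
  · refine det_eq_zero_of_row_eq_zero i fun k => ?_
    by_cases hk : k = c
    · rw [hk, hic]
    · exact hi k hk
  refine M.exists_vecMul_eq_zero_iff.mp ⟨Pi.single i (M j c) - Pi.single j (M i c), ?_, ?_⟩
  · intro h
    simpa [hij.symm, hic] using congrFun h j
  · ext k
    by_cases hk : k = c
    · simp [hk, sub_vecMul, single_vecMul, mul_comm]
    · simp [sub_vecMul, single_vecMul, hi k hk, hj k hk]

theorem Matrix.det_eq_zero_of_transpose_eq_neg_of_spatial_eq_zero {K : Type*} [Field K]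
    [CharZero K] (Θ : Matrix (Fin 4) (Fin 4) K) (hanti : Θᵀ = -Θ)
    (h12 : Θ 1 2 = 0) (h13 : Θ 1 3 = 0) (h23 : Θ 2 3 = 0) : Θ.det = 0 := by
  have hΘ : ∀ i j, Θ i j = -Θ j i := fun i j => congrFun₂ hanti j i
  have hdiag : ∀ i, Θ i i = 0 := fun i => self_eq_neg.mp (hΘ i i)
  refine Θ.det_eq_zero_of_rows_supported_at (i := 1) (j := 2) (c := 0) (by decide) ?_ ?_
  · intro k hk
    fin_cases k
    · exact absurd rfl hk
    · exact hdiag 1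
    · exact h12
    · exact h13
  · intro k hk
    fin_cases k
    · exact absurd rfl hk
    · exact (hΘ 2 1).trans (by rw [h12, neg_zero])
    · exact hdiag 2
    · exact h23

noncomputable def whObstruction (b₀ l ϑ : ℝ) (Θ : Matrix (Fin 4) (Fin 4) ℝ) (α β γ δ : Fin 4) : ℝ :=
  ∑ lam, whRiemMix b₀ l ϑ α lam γ δ * Θ lam β + ∑ lam, whRiemMix b₀ l ϑ β lam γ δ * Θ α lam

section Obstruction

variable (b₀ l ϑ : ℝ) (Θ : Matrix (Fin 4) (Fin 4) ℝ)

theorem whRiemMix_eq (α lam γ δ : Fin 4) :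
    whRiemMix b₀ l ϑ α lam γ δ = whGinv b₀ l ϑ α α * whRiem b₀ l ϑ α lam γ δ := by
  simp [whRiemMix, whGinv, diagonal_apply]

theorem whObstruction_one_three_one_two :
    whObstruction b₀ l ϑ Θ 1 3 1 2 = -(b₀ ^ 2 / (b₀ ^ 2 + l ^ 2)) * Θ 2 3 := by
  simp +decide [whObstruction, whRiemMix_eq, whRiem, whGinv, riemBlk]

theorem whObstruction_two_one_two_three :
    whObstruction b₀ l ϑ Θ 2 1 2 3 = b₀ ^ 2 * sin ϑ ^ 2 / (b₀ ^ 2 + l ^ 2) * Θ 3 1 := by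
  simp +decide [whObstruction, whRiemMix_eq, whRiem, whGinv, riemBlk, -mul_eq_mul_right_iff]
  ring

theorem whObstruction_three_one_two_three (hs : sin ϑ ≠ 0) :
    whObstruction b₀ l ϑ Θ 3 1 2 3 = -(b₀ ^ 2 / (b₀ ^ 2 + l ^ 2)) * Θ 2 1 := by
  simp +decide [whObstruction, whRiemMix_eq, whRiem, whGinv, riemBlk, -mul_eq_mul_right_iff]
  field_simp

end Obstruction

theorem stmt_17 (b₀ l ϑ : ℝ) (hb : 0 < b₀) (hϑ : ϑ ∈ Set.Ioo 0 π)
    (Θ : Matrix (Fin 4) (Fin 4) ℝ) (hanti : Θᵀ = -Θ)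
    (hcurv : ∀ α β γ δ : Fin 4,
      ∑ lam, whRiemMix b₀ l ϑ α lam γ δ * Θ lam β
        + ∑ lam, whRiemMix b₀ l ϑ β lam γ δ * Θ α lam = 0) :
    Θ 1 2 = 0 ∧ Θ 1 3 = 0 ∧ Θ 2 3 = 0 ∧ ¬ IsUnit Θ.det := by
  have hs : sin ϑ ≠ 0 := (sin_pos_of_pos_of_lt_pi hϑ.1 hϑ.2).ne'
  have hA : b₀ ^ 2 / (b₀ ^ 2 + l ^ 2) ≠ 0 := by positivity
  have hC : b₀ ^ 2 * sin ϑ ^ 2 / (b₀ ^ 2 + l ^ 2) ≠ 0 := by positivity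
  have hcurv' : ∀ α β γ δ, whObstruction b₀ l ϑ Θ α β γ δ = 0 := hcurv
  have h23 : Θ 2 3 = 0 := by
    simpa [whObstruction_one_three_one_two, hA] using hcurv' 1 3 1 2
  have h31 : Θ 3 1 = 0 := by
    simpa [whObstruction_two_one_two_three, hC] using hcurv' 2 1 2 3
  have h21 : Θ 2 1 = 0 := by
    simpa [whObstruction_three_one_two_three b₀ l ϑ Θ hs, hA] using hcurv' 3 1 2 3
  have hΘ : ∀ i j, Θ i j = -Θ j i := fun i j => congrFun₂ hanti j i
  have h12 : Θ 1 2 = 0 := by rw [hΘ, h21, neg_zero]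
  have h13 : Θ 1 3 = 0 := by rw [hΘ, h31, neg_zero]
  refine ⟨h12, h13, h23, ?_⟩
  rw [Θ.det_eq_zero_of_transpose_eq_neg_of_spatial_eq_zero hanti h12 h13 h23]
  exact not_isUnit_zero
end
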